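/- arXiv:2201.05116 — 5 statements merged into one kernel-verified Lean document; each statement's English description precedes it below -/
import Mathlib

section
/- Let $d \ge 3$ and let $B \subset \mathbb{R}^d$ be a bounded balanced Borel set. Assume Siegel's formula $\int_{X_d} \widehat{\chi}_B \, d\mu_d = \mathrm{Vol}_d(B)/\zeta(d)$ and Rogers' formula $\int_{X_d} \widehat{\chi}_B^2 \, d\mu_d = 2\,\mathrm{Vol}_d(B)/\zeta(d) + (\mathrm{Vol}_d(B)/\zeta(d))^2$, and that $\widehat{\chi}_B$ takes values in $\{0\} \cup \{2,3,4,\dots\}$ on $\Omega_B = \{\widehat{\chi}_B > 0\}$. Then $\left| \mu_d(\Omega_B) - \frac{\mathrm{Vol}_d(B)}{2\zeta(d)} \right| \le \left( \frac{\mathrm{Vol}_d(B)}{2\zeta(d)} \right)^2$. -/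
/-!
Write `Ω = {f > 0}` and `V = ∫ f`. Since `f ≥ 2` on `Ω`, `2 · 1_Ω ≤ f`, so `μ(Ω) ≤ V/2`.
Conversely `(f - 2)² ≥ 0` gives `4 f - 4 · 1_Ω ≤ f²` for every natural-valued `f`, and
integrating against Rogers' formula `∫ f² = 2V + V²` yields `μ(Ω) ≥ V/2 - (V/2)²`.
-/

open MeasureTheory
open scoped Pointwise

/-- The value `ζ(d) = ∑_{n≥1} 1/n^d` of the Riemann zeta function at a natural number. -/
noncomputable def zetaR (d : ℕ) : ℝ := ∑' n : ℕ, 1 / ((n : ℝ) + 1) ^ d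

section PositivitySet

variable {X : Type*} {f : X → ℕ}

theorem two_mul_indicator_pos_le (heven : ∀ x, 0 < f x → 2 ≤ f x) (x : X) :
    2 * {x | 0 < f x}.indicator (1 : X → ℝ) x ≤ f x := by
  by_cases hx : x ∈ {x | 0 < f x}
  · rw [Set.indicator_of_mem hx, Pi.one_apply, mul_one]
    exact_mod_cast heven x hx
  · rw [Set.indicator_of_notMem hx, mul_zero]
    positivity

theorem four_mul_sub_four_mul_indicator_pos_le_sq (x : X) :
    4 * (f x : ℝ) - 4 * {x | 0 < f x}.indicator (1 : X → ℝ) x ≤ (f x : ℝ) ^ 2 := by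
  by_cases hx : x ∈ {x | 0 < f x}
  · rw [Set.indicator_of_mem hx, Pi.one_apply]
    nlinarith [sq_nonneg ((f x : ℝ) - 2)]
  · rw [Set.indicator_of_notMem hx, Nat.eq_zero_of_not_pos hx]
    simp

variable [MeasurableSpace X] {μ : Measure X} [IsFiniteMeasure μ]

theorem two_mul_measureReal_pos_le_integral (hmeas : Measurable f)
    (hf : Integrable (fun x => (f x : ℝ)) μ) (heven : ∀ x, 0 < f x → 2 ≤ f x) :
    2 * μ.real {x | 0 < f x} ≤ ∫ x, (f x : ℝ) ∂μ := by
  have hΩ : MeasurableSet {x | 0 < f x} := measurableSet_lt measurable_const hmeas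
  calc 2 * μ.real {x | 0 < f x}
      = ∫ x, 2 * {x | 0 < f x}.indicator (1 : X → ℝ) x ∂μ := by
        rw [integral_const_mul, integral_indicator_one hΩ]
    _ ≤ ∫ x, (f x : ℝ) ∂μ :=
        integral_mono (((integrable_const 1).indicator hΩ).const_mul 2) hf
          (two_mul_indicator_pos_le heven)

theorem integral_sub_integral_sq_div_four_le_measureReal_pos (hmeas : Measurable f)
    (hf : Integrable (fun x => (f x : ℝ)) μ) (hf2 : Integrable (fun x => (f x : ℝ) ^ 2) μ) :
    ∫ x, (f x : ℝ) ∂μ - (∫ x, (f x : ℝ) ^ 2 ∂μ) / 4 ≤ μ.real {x | 0 < f x} := by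
  have hΩ : MeasurableSet {x | 0 < f x} := measurableSet_lt measurable_const hmeas
  have hind : Integrable ({x | 0 < f x}.indicator (1 : X → ℝ)) μ :=
    (integrable_const 1).indicator hΩ
  have key : 4 * ∫ x, (f x : ℝ) ∂μ - 4 * μ.real {x | 0 < f x} ≤ ∫ x, (f x : ℝ) ^ 2 ∂μ := by
    calc 4 * ∫ x, (f x : ℝ) ∂μ - 4 * μ.real {x | 0 < f x}
        = ∫ x, (4 * (f x : ℝ) - 4 * {x | 0 < f x}.indicator (1 : X → ℝ) x) ∂μ := by
          rw [integral_sub (hf.const_mul 4) (hind.const_mul 4), integral_const_mul,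
            integral_const_mul, integral_indicator_one hΩ]
      _ ≤ ∫ x, (f x : ℝ) ^ 2 ∂μ :=
          integral_mono ((hf.const_mul 4).sub (hind.const_mul 4)) hf2
            four_mul_sub_four_mul_indicator_pos_le_sq
  linarith

end PositivitySet

theorem stmt5_general {d : ℕ}
    (B : Set (Fin d → ℝ))
    {X : Type*} [MeasurableSpace X] (μd : Measure X) [IsProbabilityMeasure μd]
    (f : X → ℕ) (hmeas : Measurable f)
    (hf1 : Integrable (fun x => (f x : ℝ)) μd)
    (hf2 : Integrable (fun x => (f x : ℝ) ^ 2) μd)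
    (hSiegel : ∫ x, (f x : ℝ) ∂μd = (volume B).toReal / zetaR d)
    (hRogers : ∫ x, (f x : ℝ) ^ 2 ∂μd =
      2 * (volume B).toReal / zetaR d + ((volume B).toReal / zetaR d) ^ 2)
    (heven : ∀ x, 0 < f x → 2 ≤ f x) :
    |(μd {x | 0 < f x}).toReal - (volume B).toReal / (2 * zetaR d)|
      ≤ ((volume B).toReal / (2 * zetaR d)) ^ 2 := by
  set V := (volume B).toReal / zetaR d with hV
  have hupper := two_mul_measureReal_pos_le_integral hmeas hf1 heven
  have hlower := integral_sub_integral_sq_div_four_le_measureReal_pos hmeas hf1 hf2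
  rw [hSiegel] at hupper hlower
  rw [hRogers, mul_div_assoc] at hlower
  have hhalf : (volume B).toReal / (2 * zetaR d) = V / 2 := by
    rw [hV, div_div, mul_comm]
  rw [hhalf, abs_sub_le_iff, ← measureReal_def]
  constructor <;> nlinarith [sq_nonneg V]

/-- Lemma on small volume asymptotics of hitting sets: let `d ≥ 3` and let
`B ⊆ ℝ^d` be a bounded balanced Borel set.  Assume Siegel's formula and Rogers' formula
for the Siegel transform `f = \widehat{χ}_B` (counting primitive lattice points in `B`),
and that `f ≥ 2` wherever positive.  Then
`|μ_d(Ω_B) - Vol(B)/(2ζ(d))| ≤ (Vol(B)/(2ζ(d)))²`. -/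
theorem stmt5 {d : ℕ} (hd : 3 ≤ d)
    (B : Set (Fin d → ℝ)) (hBbd : Bornology.IsBounded B) (hBmeas : MeasurableSet B)
    (hBbal : ∀ t : ℝ, |t| ≤ 1 → t • B ⊆ B)
    {X : Type*} [MeasurableSpace X] (μd : Measure X) [IsProbabilityMeasure μd]
    (f : X → ℕ) (hmeas : Measurable f)
    (hf1 : Integrable (fun x => (f x : ℝ)) μd)
    (hf2 : Integrable (fun x => (f x : ℝ) ^ 2) μd)
    (hSiegel : ∫ x, (f x : ℝ) ∂μd = (volume B).toReal / zetaR d)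
    (hRogers : ∫ x, (f x : ℝ) ^ 2 ∂μd =
      2 * (volume B).toReal / zetaR d + ((volume B).toReal / zetaR d) ^ 2)
    (heven : ∀ x, 0 < f x → 2 ≤ f x) :
    |(μd {x | 0 < f x}).toReal - (volume B).toReal / (2 * zetaR d)|
      ≤ ((volume B).toReal / (2 * zetaR d)) ^ 2 :=
  stmt5_general B μd f hmeas hf1 hf2 hSiegel hRogers heven
end

section
/- Let $(Z,\nu)$ be a probability space, $(F_n)$ a sequence of finite index sets with $|F_n| \to \infty$, and for each $n$ and $h \in F_n$ a measurable set $A_{n,h} \subseteq Z$. Define $N_n(z) = \#\{h \in F_n : z \in A_{n,h}\}$ and, for $r \ge 1$ and $m \ge 0$, $\Delta_{n,r}(m) = \max\{ \big| |F_n|^r \nu(\bigcap_{h \in F'} A_{n,h}) - m^r \big| : F' \subseteq F_n, |F'| = r \}$ (with $\Delta_{n,r}(m)=0$ if $|F_n|<r$). If $\lim_{n\to\infty} \Delta_{n,r}(m) = 0$ for every $r \ge 1$, then for every $r \ge 1$, $\lim_{n\to\infty} \int_Z \binom{N_n}{r} \, d\nu = \frac{m^r}{r!}$; consequently $N_n$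 converges in distribution to a Poisson random variable with mean $m$. -/
/-!
Counting `(N_n(z) choose r)` as the number of `r`-subsets of `F_n` all of whose sets contain `z`
gives `∫ (N_n choose r) dν = ∑_{|F'| = r} ν(⋂_{h ∈ F'} A_{n,h})`. Each of the `(|F_n| choose r)`
summands is `m^r / |F_n|^r + o(|F_n|^{-r})` uniformly, and `(|F_n| choose r) / |F_n|^r → 1/r!`,
so the factorial moments tend to `m^r / r!`.

For the distribution, the truncated inclusion–exclusion (Bonferroni) inequality
`|∑_{j ≤ M} (-1)^j (k+j choose k) (N choose k+j) - [N = k]| ≤ (k+M+1 choose k) (N choose k+M+1)`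
holds for every `N = N_n(z)`. Integrating it and letting first `n → ∞` and then `M → ∞` turns the
partial sums into those of `m^k/k! · e^{-m}`, with an error `m^k/k! · m^{M+1}/(M+1)! → 0`.
-/

open MeasureTheory Filter
open scoped Classical

open Finset
open scoped Nat Topology

theorem abs_alternating_sum_range_choose_sub_le (d M : ℕ) :
    |(∑ j ∈ range (M + 1), ((-1) ^ j * d.choose j : ℤ)) - if d = 0 then 1 else 0|
      ≤ d.choose (M + 1) := by
  cases d with
  | zero => simp [sum_range_succ']
  | succ e =>
    rw [Int.alternating_sum_range_choose_eq_choose, if_neg e.succ_ne_zero, sub_zero, abs_mul,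
      abs_neg_one_pow, one_mul, Nat.abs_cast, Nat.choose_succ_succ']
    push_cast
    linarith [(e.choose (M + 1)).cast_nonneg (α := ℤ)]

theorem abs_bonferroni_sum_sub_le (n k M : ℕ) :
    |(∑ j ∈ range (M + 1), ((-1) ^ j * (k + j).choose k * n.choose (k + j) : ℤ))
        - if n = k then 1 else 0|
      ≤ (k + M + 1).choose k * n.choose (k + M + 1) := by
  rcases lt_or_ge n k with hnk | hkn
  · have hzero : ∀ j, n.choose (k + j) = 0 := fun j => Nat.choose_eq_zero_of_lt (by omega)
    simp only [hzero, hnk.ne, Nat.cast_zero, mul_zero, sum_const_zero, if_false, sub_zero,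
      abs_zero]
    positivity
  obtain ⟨d, rfl⟩ := Nat.exists_eq_add_of_le hkn
  have hsplit : ∀ j, (k + j).choose k * (k + d).choose (k + j) = (k + d).choose k * d.choose j :=
    fun j => by
      simpa [mul_comm] using Nat.choose_mul (n := k + d) (k := k + j) (Nat.le_add_right k j)
  have hsum : (∑ j ∈ range (M + 1), ((-1) ^ j * (k + j).choose k * (k + d).choose (k + j) : ℤ))
      = (k + d).choose k * ∑ j ∈ range (M + 1), ((-1) ^ j * d.choose j : ℤ) := by
    rw [mul_sum]
    refine sum_congr rfl fun j _ => ?_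
    rw [mul_assoc, ← Nat.cast_mul, hsplit]
    push_cast
    ring
  have hind : (if k + d = k then 1 else 0 : ℤ) = (k + d).choose k * if d = 0 then 1 else 0 := by
    split_ifs <;> simp_all
  rw [hsum, hind, ← mul_sub, abs_mul, Nat.abs_cast, ← Nat.cast_mul, Nat.add_assoc, hsplit]
  push_cast
  exact mul_le_mul_of_nonneg_left (abs_alternating_sum_range_choose_sub_le d M) (by positivity)

theorem choose_mul_pow_div_factorial (k j : ℕ) (m : ℝ) :
    ((k + j).choose k : ℝ) * (m ^ (k + j) / (k + j)!) = m ^ k / k ! * (m ^ j / j !) := by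
  rw [Nat.cast_choose ℝ (Nat.le_add_right k j), Nat.add_sub_cancel_left, pow_add]
  field_simp

theorem tendsto_of_abs_sub_le_of_tendsto {α : Type*} {l : Filter α} {P : α → ℝ}
    {T E : ℕ → α → ℝ} {Q R : ℕ → ℝ} {L : ℝ} (hbound : ∀ M a, |T M a - P a| ≤ E M a)
    (hT : ∀ M, Tendsto (T M) l (𝓝 (Q M))) (hE : ∀ M, Tendsto (E M) l (𝓝 (R M)))
    (hQ : Tendsto Q atTop (𝓝 L)) (hR : Tendsto R atTop (𝓝 0)) : Tendsto P l (𝓝 L) := by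
  rw [Metric.tendsto_nhds]
  intro ε hε
  obtain ⟨M, hQM, hRM⟩ : ∃ M, |Q M - L| < ε / 4 ∧ |R M| < ε / 4 := by
    simpa only [Real.dist_eq, sub_zero] using
      ((Metric.tendsto_nhds.mp hQ _ (by positivity)).and
        (Metric.tendsto_nhds.mp hR _ (by positivity))).exists
  filter_upwards [Metric.tendsto_nhds.mp (hT M) _ (by positivity : 0 < ε / 4),
    Metric.tendsto_nhds.mp (hE M) _ (by positivity : 0 < ε / 4)] with a hTa hEa
  rw [Real.dist_eq] at hTa hEa ⊢
  have h₁ := abs_sub_le (P a) (T M a) L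
  have h₂ := abs_sub_le (T M a) (Q M) L
  have h₃ := abs_sub_comm (T M a) (P a)
  linarith [hbound M a, abs_lt.mp hEa, abs_lt.mp hRM]

theorem tendsto_choose_div_pow_atTop (r : ℕ) :
    Tendsto (fun N : ℕ => (N.choose r : ℝ) / N ^ r) atTop (𝓝 (1 / r !)) := by
  have hequiv := (isEquivalent_choose r).div
    (Asymptotics.IsEquivalent.refl (u := fun N : ℕ => (N : ℝ) ^ r))
  refine hequiv.symm.tendsto_nhds (tendsto_const_nhds.congr' ?_)
  filter_upwards [eventually_ge_atTop 1] with N hN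
  have : (N : ℝ) ≠ 0 := by positivity
  simp only [Pi.div_apply]
  field_simp

theorem tendsto_sum_powersetCard_of_card_pow_mul_tendsto {H : Type*} {F : ℕ → Finset H}
    (hF : Tendsto (fun n => #(F n)) atTop atTop) {p : ℕ → Finset H → ℝ} {a : ℝ} {r : ℕ}
    (hp : ∀ ε > (0 : ℝ), ∀ᶠ n in atTop, ∀ t ⊆ F n, #t = r → |(#(F n) : ℝ) ^ r * p n t - a| < ε) :
    Tendsto (fun n => ∑ t ∈ (F n).powersetCard r, p n t) atTop (𝓝 (a / r !)) := by
  have hmain : Tendsto (fun n => ((#(F n)).choose r : ℝ) / #(F n) ^ r * a) atTop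
      (𝓝 (a / r !)) := by
    simpa [div_eq_inv_mul] using ((tendsto_choose_div_pow_atTop r).comp hF).mul_const a
  have herr : Tendsto (fun n => ∑ t ∈ (F n).powersetCard r, p n t
      - ((#(F n)).choose r : ℝ) / #(F n) ^ r * a) atTop (𝓝 0) := by
    rw [Metric.tendsto_nhds]
    intro ε hε
    filter_upwards [hp (ε / 2) (by positivity), hF.eventually_ge_atTop 1] with n hn hN
    have hc : (0 : ℝ) < (#(F n) : ℝ) ^ r := by positivity
    have hsplit : ∑ t ∈ (F n).powersetCard r, p n t - ((#(F n)).choose r : ℝ) / #(F n) ^ r * a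
        = ∑ t ∈ (F n).powersetCard r, ((#(F n) : ℝ) ^ r * p n t - a) / #(F n) ^ r := by
      rw [← sum_div, sum_sub_distrib, sum_const, card_powersetCard, nsmul_eq_mul, ← mul_sum]
      field_simp
    rw [Real.dist_eq, sub_zero, hsplit]
    calc |∑ t ∈ (F n).powersetCard r, ((#(F n) : ℝ) ^ r * p n t - a) / #(F n) ^ r|
        ≤ ∑ t ∈ (F n).powersetCard r, ε / 2 / #(F n) ^ r := by
          refine (abs_sum_le_sum_abs _ _).trans (sum_le_sum fun t ht => ?_)
          rw [mem_powersetCard] at ht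
          rw [abs_div, abs_of_pos hc]
          exact div_le_div_of_nonneg_right (hn t ht.1 ht.2).le hc.le
      _ = ((#(F n)).choose r : ℝ) / #(F n) ^ r * (ε / 2) := by
          rw [sum_const, card_powersetCard, nsmul_eq_mul]
          ring
      _ ≤ 1 * (ε / 2) := by
          gcongr
          exact div_le_one_of_le₀ (by exact_mod_cast Nat.choose_le_pow _ r) hc.le
      _ < ε := by linarith
  simpa using herr.add hmain

section Counting

variable {Z H : Type*} (s : Finset H) (A : H → Set Z)

theorem powersetCard_filter_mem (r : ℕ) (z : Z) :
    {h ∈ s | z ∈ A h}.powersetCard r = {t ∈ s.powersetCard r | z ∈ ⋂ h ∈ t, A h} := by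
  ext t
  simp only [mem_powersetCard, mem_filter, subset_iff, Set.mem_iInter]
  exact ⟨fun ⟨hts, hcard⟩ => ⟨⟨fun h hh => (hts hh).1, hcard⟩, fun h hh => (hts hh).2⟩,
    fun ⟨⟨hts, hcard⟩, hz⟩ => ⟨fun h hh => ⟨hts hh, hz h hh⟩, hcard⟩⟩

theorem choose_card_filter_mem_eq_sum_indicator (r : ℕ) :
    (fun z => ((#{h ∈ s | z ∈ A h}).choose r : ℝ))
      = fun z => ∑ t ∈ s.powersetCard r, (⋂ h ∈ t, A h).indicator 1 z := by
  ext z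
  rw [← card_powersetCard, powersetCard_filter_mem, card_filter]
  push_cast
  rfl

variable [MeasurableSpace Z] {ν : Measure Z} {A}

theorem measurable_card_filter_mem (hA : ∀ h, MeasurableSet (A h)) :
    Measurable fun z => #{h ∈ s | z ∈ A h} := by
  simp_rw [card_filter]
  exact Finset.measurable_sum _ fun h _ => Measurable.ite (hA h) measurable_const measurable_const

theorem integrable_choose_card_filter_mem [IsFiniteMeasure ν] (hA : ∀ h, MeasurableSet (A h))
    (r : ℕ) : Integrable (fun z => ((#{h ∈ s | z ∈ A h}).choose r : ℝ)) ν := by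
  rw [choose_card_filter_mem_eq_sum_indicator]
  exact integrable_finsetSum _ fun t _ =>
    (integrable_const 1).indicator (t.measurableSet_biInter fun h _ => hA h)

theorem integral_choose_card_filter_mem [IsFiniteMeasure ν] (hA : ∀ h, MeasurableSet (A h))
    (r : ℕ) : ∫ z, ((#{h ∈ s | z ∈ A h}).choose r : ℝ) ∂ν
      = ∑ t ∈ s.powersetCard r, ν.real (⋂ h ∈ t, A h) := by
  have hmeas : ∀ t : Finset H, MeasurableSet (⋂ h ∈ t, A h) :=
    fun t => t.measurableSet_biInter fun h _ => hA h
  rw [choose_card_filter_mem_eq_sum_indicator, integral_finsetSum _ fun t _ =>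
    (integrable_const 1).indicator (hmeas t)]
  exact sum_congr rfl fun t _ => integral_indicator_one (hmeas t)

end Counting

section FactorialMoments

variable {Z : Type*} [MeasurableSpace Z] {ν : Measure Z}

theorem abs_sum_integral_choose_sub_measureReal_le [IsFiniteMeasure ν] {X : Z → ℕ}
    (hX : Measurable X) (hint : ∀ r, Integrable (fun z => ((X z).choose r : ℝ)) ν) (k M : ℕ) :
    |(∑ j ∈ range (M + 1), (-1) ^ j * ((k + j).choose k : ℝ) * ∫ z, ((X z).choose (k + j) : ℝ) ∂ν)
        - ν.real {z | X z = k}|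
      ≤ (k + M + 1).choose k * ∫ z, ((X z).choose (k + M + 1) : ℝ) ∂ν := by
  have hlevel : MeasurableSet {z | X z = k} := hX (measurableSet_singleton k)
  set g : Z → ℝ := fun z =>
    ∑ j ∈ range (M + 1), (-1) ^ j * ((k + j).choose k : ℝ) * ((X z).choose (k + j) : ℝ)
  have hg : Integrable g ν := integrable_finsetSum _ fun j _ => (hint (k + j)).const_mul _
  have hind : Integrable ({z | X z = k}.indicator 1) ν :=
    (integrable_const (1 : ℝ)).indicator hlevel
  have hpoint : ∀ z, |g z - {z | X z = k}.indicator 1 z|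
      ≤ (k + M + 1).choose k * ((X z).choose (k + M + 1) : ℝ) := fun z => by
    simp only [g, Set.indicator_apply, Set.mem_ofPred_eq, Pi.one_apply]
    exact_mod_cast abs_bonferroni_sum_sub_le (X z) k M
  calc _ = |∫ z, (g z - {z | X z = k}.indicator 1 z) ∂ν| := by
        rw [integral_sub hg hind, integral_indicator_one hlevel, integral_finsetSum _
          fun j _ => (hint (k + j)).const_mul _]
        simp only [integral_const_mul]
    _ ≤ ∫ z, |g z - {z | X z = k}.indicator 1 z| ∂ν := abs_integral_le_integral_abs
    _ ≤ ∫ z, (k + M + 1).choose k * ((X z).choose (k + M + 1) : ℝ) ∂ν :=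
        integral_mono (hg.sub hind).abs ((hint _).const_mul _) hpoint
    _ = _ := integral_const_mul _ _

theorem tendsto_measureReal_eq_of_tendsto_integral_choose {X : ℕ → Z → ℕ} [IsFiniteMeasure ν]
    (hX : ∀ n, Measurable (X n)) (hint : ∀ n r, Integrable (fun z => ((X n z).choose r : ℝ)) ν)
    {m : ℝ}
    (hmom : ∀ r, Tendsto (fun n => ∫ z, ((X n z).choose r : ℝ) ∂ν) atTop (𝓝 (m ^ r / r !)))
    (k : ℕ) :
    Tendsto (fun n => ν.real {z | X n z = k}) atTop (𝓝 (m ^ k / k ! * Real.exp (-m))) := by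
  refine tendsto_of_abs_sub_le_of_tendsto
    (fun M n => abs_sum_integral_choose_sub_measureReal_le (hX n) (hint n) k M)
    (fun M => tendsto_finsetSum _ fun j _ => (hmom (k + j)).const_mul _)
    (fun M => (hmom (k + M + 1)).const_mul _) ?_ ?_
  · have hexp : Tendsto (fun M => ∑ j ∈ range (M + 1), (-m) ^ j / j !) atTop
        (𝓝 (Real.exp (-m))) := by
      rw [Real.exp_eq_exp_ℝ]
      exact (NormedSpace.expSeries_div_hasSum_exp (-m)).tendsto_sum_nat.comp
        (tendsto_add_atTop_nat 1)
    refine (hexp.const_mul (m ^ k / k !)).congr fun M => ?_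
    rw [mul_sum]
    refine sum_congr rfl fun j _ => ?_
    rw [mul_assoc, choose_mul_pow_div_factorial, neg_pow, mul_div_assoc]
    ring
  · have hpow := ((FloorSemiring.tendsto_pow_div_factorial_atTop m).comp
      (tendsto_add_atTop_nat 1)).const_mul (m ^ k / k !)
    rw [mul_zero] at hpow
    refine hpow.congr fun M => ?_
    rw [Nat.add_assoc, choose_mul_pow_div_factorial]
    rfl

end FactorialMoments

theorem stmt6_general {Z H : Type*} [MeasurableSpace Z] (ν : Measure Z) [IsProbabilityMeasure ν]
    (F : ℕ → Finset H) (hF : Tendsto (fun n => (F n).card) atTop atTop)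
    (A : ℕ → H → Set Z) (hA : ∀ n h, MeasurableSet (A n h)) (m : ℝ)
    (hΔ : ∀ r : ℕ, 1 ≤ r → ∀ ε > (0 : ℝ), ∀ᶠ n in atTop,
      ∀ F' ⊆ F n, F'.card = r →
        |((F n).card : ℝ) ^ r * (ν (⋂ h ∈ F', A n h)).toReal - m ^ r| < ε) :
    (∀ r : ℕ, 1 ≤ r →
      Tendsto
        (fun n => ∫ z, (((F n).filter (fun h => z ∈ A n h)).card.choose r : ℝ) ∂ν)
        atTop (nhds (m ^ r / (Nat.factorial r : ℝ)))) ∧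
    (∀ k : ℕ,
      Tendsto
        (fun n => (ν {z | ((F n).filter (fun h => z ∈ A n h)).card = k}).toReal)
        atTop (nhds (m ^ k / (Nat.factorial k : ℝ) * Real.exp (-m)))) := by
  have hmom : ∀ r, Tendsto (fun n => ∫ z, ((#{h ∈ F n | z ∈ A n h}).choose r : ℝ) ∂ν) atTop
      (𝓝 (m ^ r / r !)) := by
    intro r
    rcases Nat.eq_zero_or_pos r with rfl | hr
    · simp
    · simp_rw [integral_choose_card_filter_mem (F _) (hA _)]
      exact tendsto_sum_powersetCard_of_card_pow_mul_tendsto hF (hΔ r hr)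
  exact ⟨fun r _ => hmom r, tendsto_measureReal_eq_of_tendsto_integral_choose
    (fun n => measurable_card_filter_mem (F n) (hA n))
    (fun n => integrable_choose_card_filter_mem (F n) (hA n)) hmom⟩

/-- general criterion for Poisson approximation: if the quantities
`Δ_{n,r}(m) = max { | |F_n|^r ν(⋂_{h∈F'} A_{n,h}) - m^r | : F' ⊆ F_n, |F'| = r }` tend to
zero for every `r ≥ 1`, then the factorial moments of `N_n(z) = #{h ∈ F_n : z ∈ A_{n,h}}`
converge to those of the Poisson distribution with mean `m`, and consequently `N_n`
converges in distribution to `Poi(m)`. -/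
theorem stmt6 {Z H : Type*} [MeasurableSpace Z] (ν : Measure Z) [IsProbabilityMeasure ν]
    (F : ℕ → Finset H) (hF : Tendsto (fun n => (F n).card) atTop atTop)
    (A : ℕ → H → Set Z) (hA : ∀ n h, MeasurableSet (A n h)) (m : ℝ) (hm : 0 ≤ m)
    (hΔ : ∀ r : ℕ, 1 ≤ r → ∀ ε > (0 : ℝ), ∀ᶠ n in atTop,
      ∀ F' ⊆ F n, F'.card = r →
        |((F n).card : ℝ) ^ r * (ν (⋂ h ∈ F', A n h)).toReal - m ^ r| < ε) :
    (∀ r : ℕ, 1 ≤ r →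
      Tendsto
        (fun n => ∫ z, (((F n).filter (fun h => z ∈ A n h)).card.choose r : ℝ) ∂ν)
        atTop (nhds (m ^ r / (Nat.factorial r : ℝ)))) ∧
    (∀ k : ℕ,
      Tendsto
        (fun n => (ν {z | ((F n).filter (fun h => z ∈ A n h)).card = k}).toReal)
        atTop (nhds (m ^ k / (Nat.factorial k : ℝ) * Real.exp (-m)))) :=
  stmt6_general ν F hF A hA m hΔ
end

section
/- Suppose $(\eta, C)$ is an $(a,b,c)$-regular pair on $\mathbb{R}^d$: $\eta$ is locally Lipschitz and $\gamma$-homogeneous for some $\gamma \ge 0$, $\tau$ is a semi-norm with $C = \{\tau \le 1\}$, and $C(t) = \{x \in C : \eta(x) < t\}$ is bounded for each $t \ge 0$. Then there exists a constant $M > 0$ such that for all $\varepsilon, t \in [0,1]$, $W_\varepsilon . C(t) \subseteq (1 + M\varepsilon) \cdot C(t + M\varepsilon)$, where $W_\varepsilon = \{g \in \mathrm{SL}_d(\mathbb{R}) : \|g - \mathrm{id}\|_{\mathrm{op}} < \varepsilon\}$. -/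
open scoped Pointwise

/-!
On the bounded set `C(1)`, both `η` and the seminorm `τ` are Lipschitz (a seminorm is convex,
hence locally Lipschitz in finite dimension), and `‖g x - x‖ ≤ ‖g - id‖ ‖x‖`. So `g` raises
`η` and `τ` on `C(t)` by at most `O(ε)`; rescaling by `(1 + Mε)⁻¹` brings `τ` back below `1`
and, `η` being homogeneous of nonnegative degree, cannot push `η` above `t + Mε`.
-/

open Metric

lemma LocallyLipschitz.exists_apply_le_add_mul_norm_sub_id
    {𝕜 E : Type*} [NontriviallyNormedField 𝕜] [NormedAddCommGroup E] [NormedSpace 𝕜 E]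
    [ProperSpace E] {f : E → ℝ} (hf : LocallyLipschitz f) {R : ℝ} (hR : 0 ≤ R) :
    ∃ L ≥ (0 : ℝ), ∀ g : E →L[𝕜] E, ‖g - ContinuousLinearMap.id 𝕜 E‖ ≤ 1 →
      ∀ x, ‖x‖ ≤ R → f (g x) ≤ f x + L * ‖g - ContinuousLinearMap.id 𝕜 E‖ := by
  obtain ⟨K, hK⟩ :=
    hf.locallyLipschitzOn.exists_lipschitzOnWith_of_compact (isCompact_closedBall 0 (2 * R))
  refine ⟨K * R, by positivity, fun g hg x hx => ?_⟩
  set δ := ‖g - ContinuousLinearMap.id 𝕜 E‖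
  have hgx : dist (g x) x ≤ δ * R :=
    calc dist (g x) x = ‖(g - ContinuousLinearMap.id 𝕜 E) x‖ := by simp [dist_eq_norm]
      _ ≤ δ * ‖x‖ := (g - ContinuousLinearMap.id 𝕜 E).le_opNorm x
      _ ≤ δ * R := by gcongr
  have hx' : x ∈ closedBall (0 : E) (2 * R) := by
    rw [mem_closedBall_zero_iff]; linarith
  have hgx' : g x ∈ closedBall (0 : E) (2 * R) := by
    rw [mem_closedBall_zero_iff]
    calc ‖g x‖ ≤ ‖x‖ + dist (g x) x := dist_eq_norm (g x) x ▸ norm_le_norm_add_norm_sub' _ _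
      _ ≤ R + 1 * R := by gcongr; exact hgx.trans (by gcongr)
      _ = 2 * R := by ring
  have := (abs_le.mp ((Real.dist_eq _ _).symm.le.trans (hK.dist_le_mul _ hgx' _ hx'))).2
  nlinarith [K.coe_nonneg]

lemma mem_smul_setOf_lt_and_seminorm_le_one {E : Type*} [AddCommGroup E] [Module ℝ E]
    {γ : ℝ} (hγ : 0 ≤ γ) {η : E → ℝ} (hη : ∀ s : ℝ, 0 < s → ∀ x, η (s • x) = s ^ γ * η x)
    (τ : Seminorm ℝ E)
    {s b : ℝ} (hs : 1 ≤ s) (hb : 0 < b) {z : E} (hηz : η z < b) (hτz : τ z ≤ s) :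
    z ∈ s • {y | η y < b ∧ τ y ≤ 1} := by
  have hs₀ : 0 < s := one_pos.trans_le hs
  rw [Set.mem_smul_set_iff_inv_smul_mem₀ hs₀.ne']
  refine ⟨?_, ?_⟩
  · have hpow : s⁻¹ ^ γ ≤ 1 := Real.rpow_le_one (by positivity) (inv_le_one_of_one_le₀ hs) hγ
    have hpow₀ : 0 < s⁻¹ ^ γ := by positivity
    rw [hη _ (inv_pos.mpr hs₀)]
    -- `η z` may be negative, in which case `b > 0` does the job
    calc s⁻¹ ^ γ * η z ≤ max (η z) 0 := by
          rcases le_total 0 (η z) with h | h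
          · exact (mul_le_of_le_one_left h hpow).trans (le_max_left _ _)
          · exact (mul_nonpos_of_nonneg_of_nonpos hpow₀.le h).trans (le_max_right _ _)
      _ < b := max_lt hηz hb
  · rw [map_smul_eq_mul, Real.norm_eq_abs, abs_of_pos (inv_pos.mpr hs₀)]
    exact inv_mul_le_one_of_le₀ hτz hs₀.le

theorem stmt9_general {d : ℕ} (γ : ℝ) (hγ : 0 ≤ γ)
    (η : (Fin d → ℝ) → ℝ) (hηlip : LocallyLipschitz η)
    (hηhom : ∀ s : ℝ, 0 < s → ∀ x, η (s • x) = s ^ γ * η x)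
    (τ : Seminorm ℝ (Fin d → ℝ))
    (hbdd : ∀ t : ℝ, 0 ≤ t → Bornology.IsBounded {x | η x < t ∧ τ x ≤ 1}) :
    ∃ M > (0 : ℝ), ∀ ε t : ℝ, ε ∈ Set.Icc (0 : ℝ) 1 → t ∈ Set.Icc (0 : ℝ) 1 →
      ∀ g : (Fin d → ℝ) →L[ℝ] (Fin d → ℝ),
        LinearMap.det (g : (Fin d → ℝ) →ₗ[ℝ] (Fin d → ℝ)) = 1 →
        ‖g - ContinuousLinearMap.id ℝ (Fin d → ℝ)‖ < ε →
        ∀ x : Fin d → ℝ, η x < t → τ x ≤ 1 →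
          g x ∈ (1 + M * ε) • {y : Fin d → ℝ | η y < t + M * ε ∧ τ y ≤ 1} := by
  obtain ⟨R, hR₀, hR⟩ := (hbdd 1 zero_le_one).exists_pos_norm_le
  obtain ⟨Lη, hLη, hη⟩ := hηlip.exists_apply_le_add_mul_norm_sub_id (𝕜 := ℝ) hR₀.le
  obtain ⟨Lτ, hLτ, hτ⟩ :=
    τ.convexOn.locallyLipschitz.exists_apply_le_add_mul_norm_sub_id (𝕜 := ℝ) hR₀.le
  refine ⟨Lη + Lτ + 1, by positivity, ?_⟩
  rintro ε t ⟨-, hε₁⟩ ⟨ht₀, ht₁⟩ g - hg x hηx hτx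
  have hε₀ : 0 < ε := (norm_nonneg _).trans_lt hg
  have hx : ‖x‖ ≤ R := hR x ⟨hηx.trans_le ht₁, hτx⟩
  have hg₁ := hg.le.trans hε₁
  refine mem_smul_setOf_lt_and_seminorm_le_one hγ hηhom τ (by nlinarith) (by nlinarith) ?_ ?_
  · nlinarith [hη g hg₁ x hx]
  · nlinarith [hτ g hg₁ x hx]

/-- Lemma 3.2, perturbation of regular pairs: suppose `η` is a nonnegative
locally Lipschitz `γ`-homogeneous function, `τ` a seminorm, `C = {τ ≤ 1}` and each
`C(t) = {x : η x < t, τ x ≤ 1}` is bounded.  Then there is `M > 0` such that for all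
`ε, t ∈ [0,1]`, `W_ε.C(t) ⊆ (1 + Mε) • C(t + Mε)`, where
`W_ε = {g ∈ SL_d(ℝ) : ‖g - id‖_op < ε}` (operator norm w.r.t. the sup norm). -/
theorem stmt9 {d : ℕ} (hd : 1 ≤ d) (γ : ℝ) (hγ : 0 ≤ γ)
    (η : (Fin d → ℝ) → ℝ) (hηpos : ∀ x, 0 ≤ η x) (hηlip : LocallyLipschitz η)
    (hηhom : ∀ s : ℝ, 0 < s → ∀ x, η (s • x) = s ^ γ * η x)
    (τ : Seminorm ℝ (Fin d → ℝ))
    (hbdd : ∀ t : ℝ, 0 ≤ t → Bornology.IsBounded {x | η x < t ∧ τ x ≤ 1}) :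
    ∃ M > (0 : ℝ), ∀ ε t : ℝ, ε ∈ Set.Icc (0 : ℝ) 1 → t ∈ Set.Icc (0 : ℝ) 1 →
      ∀ g : (Fin d → ℝ) →L[ℝ] (Fin d → ℝ),
        LinearMap.det (g : (Fin d → ℝ) →ₗ[ℝ] (Fin d → ℝ)) = 1 →
        ‖g - ContinuousLinearMap.id ℝ (Fin d → ℝ)‖ < ε →
        ∀ x : Fin d → ℝ, η x < t → τ x ≤ 1 →
          g x ∈ (1 + M * ε) • {y : Fin d → ℝ | η y < t + M * ε ∧ τ y ≤ 1} :=
  stmt9_general γ hγ η hηlip hηhom τ hbdd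
end

section
/- Let $d \ge 2$, $\eta(x) = |x_1 \cdots x_d|$, and $C(t) = \{x \in [-1,1]^d : \eta(x) < t\}$ for $t \in (0,1)$. Then $\lim_{t \to 0^+} \frac{\mathrm{Vol}_d(C(t))}{t (-\log t)^{d-1}} = \frac{2^d}{(d-1)!}$. -/
open MeasureTheory Filter
open scoped ENNReal

namespace Stmt10Aux

/-- The sublevel set of the product form in the cube. -/
def S (d : ℕ) (t : ℝ) : Set (Fin d → ℝ) :=
  {x | (∀ i, |x i| ≤ 1) ∧ |∏ i, x i| < t}

lemma vol_S_big {d : ℕ} {t : ℝ} (ht : 1 < t) :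
    volume (S d t) = ENNReal.ofReal ((2 : ℝ) ^ d) := by
  have hEq : S d t = Set.pi Set.univ (fun _ : Fin d => Set.Icc (-1 : ℝ) 1) := by
    ext x
    simp only [S, Set.mem_setOf_eq, Set.mem_pi, Set.mem_univ, true_implies, Set.mem_Icc,
      ← abs_le]
    refine ⟨fun h => h.1, fun h => ⟨h, lt_of_le_of_lt ?_ ht⟩⟩
    rw [Finset.abs_prod]
    exact Finset.prod_le_one (fun i _ => abs_nonneg _) (fun i _ => h i)
  rw [hEq, volume_pi_pi]
  rw [Finset.prod_const]
  simp only [Real.volume_Icc, Finset.card_univ, Fintype.card_fin]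
  norm_num [← ENNReal.ofReal_pow (by norm_num : (0:ℝ) ≤ 2)]

lemma lintegral_comp_abs (f : ℝ → ℝ≥0∞) (hf : Measurable f) :
    ∫⁻ x : ℝ, f (|x|) = 2 * ∫⁻ x in Set.Ioi (0 : ℝ), f x := by
  have hemb : MeasurableEmbedding (Neg.neg : ℝ → ℝ) :=
    (Homeomorph.neg ℝ).measurableEmbedding
  have h1 : (∫⁻ x in Set.Iic (0:ℝ), f (|x|)) = ∫⁻ x in Set.Ioi (0:ℝ), f x := by
    have hpre : (Neg.neg : ℝ → ℝ) ⁻¹' Set.Iic 0 = Set.Ici 0 := by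
      ext x; simp
    calc ∫⁻ x in Set.Iic (0:ℝ), f (|x|)
        = ∫⁻ x in Set.Iic (0:ℝ), f (|x|) ∂(Measure.map Neg.neg volume) := by
          rw [Measure.map_neg_eq_self]
      _ = ∫⁻ x in (Neg.neg : ℝ → ℝ) ⁻¹' Set.Iic 0, f (|(-x)|) :=
          setLIntegral_map measurableSet_Iic (hf.comp measurable_abs) measurable_neg
      _ = ∫⁻ x in Set.Ici (0:ℝ), f x := by
          rw [hpre]
          refine setLIntegral_congr_fun measurableSet_Ici ?_
          intro x hx
          dsimp only
          rw [abs_neg, abs_of_nonneg hx]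
      _ = ∫⁻ x in Set.Ioi (0:ℝ), f x := by
          rw [Measure.restrict_congr_set (MeasureTheory.Ioi_ae_eq_Ici (a := (0:ℝ))).symm]
  have h2 : (∫⁻ x in Set.Ioi (0:ℝ), f (|x|)) = ∫⁻ x in Set.Ioi (0:ℝ), f x := by
    refine setLIntegral_congr_fun measurableSet_Ioi ?_
    intro x hx
    dsimp only
    rw [abs_of_pos hx]
  have := lintegral_add_compl (fun x : ℝ => f (|x|)) (measurableSet_Iic (a := (0:ℝ)))
    (μ := volume)
  rw [Set.compl_Iic] at this
  rw [← this, h1, h2, two_mul]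

lemma vol_S {d : ℕ} : ∀ {t : ℝ}, 0 < t → t < 1 →
    volume (S d t)
      = ENNReal.ofReal ((2:ℝ)^d * (t * ∑ k ∈ Finset.range d,
          (-Real.log t)^k / (Nat.factorial k))) := by
  induction d with
  | zero =>
    intro t ht h1
    have hempty : S 0 t = ∅ := by
      ext x
      simp only [S, Set.mem_setOf_eq, Set.mem_empty_iff_false, iff_false, not_and]
      intro _
      rw [Finset.univ_eq_empty, Finset.prod_empty, abs_one]
      exact not_lt.2 h1.le
    simp [hempty]
  | succ d ih =>
    intro t ht h1
    -- Fubini step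
    set e := MeasurableEquiv.piFinSuccAbove (fun _ : Fin (d+1) => ℝ) 0 with he
    set S' : Set (ℝ × (Fin d → ℝ)) :=
      {p | |p.1| ≤ 1 ∧ (∀ i, |p.2 i| ≤ 1) ∧ |p.1| * |∏ i, p.2 i| < t} with hS'def
    have hpre : S (d+1) t = e ⁻¹' S' := by
      ext x
      simp only [S, Set.mem_setOf_eq, Set.mem_preimage, he, hS'def,
        MeasurableEquiv.piFinSuccAbove_apply, Fin.removeNth_zero]
      rw [Fin.forall_fin_succ, Fin.prod_univ_succ, abs_mul, and_assoc]
      rfl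
    have hS'meas : MeasurableSet S' := by
      have m1 : Measurable fun p : ℝ × (Fin d → ℝ) => |p.1| := measurable_fst.abs
      have m2 : Measurable fun p : ℝ × (Fin d → ℝ) => |∏ i, p.2 i| :=
        (Finset.measurable_prod Finset.univ
          (fun i _ => (measurable_pi_apply i).comp measurable_snd)).abs
      have A : MeasurableSet {p : ℝ × (Fin d → ℝ) | |p.1| ≤ 1} :=
        measurableSet_le m1 measurable_const
      have B : MeasurableSet {p : ℝ × (Fin d → ℝ) | ∀ i, |p.2 i| ≤ 1} := by
        rw [Set.setOf_forall]
        refine MeasurableSet.iInter fun i => ?_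
        have mi : Measurable fun p : ℝ × (Fin d → ℝ) => |p.2 i| :=
          ((measurable_pi_apply i).comp measurable_snd).abs
        exact measurableSet_le mi measurable_const
      have C : MeasurableSet {p : ℝ × (Fin d → ℝ) | |p.1| * |∏ i, p.2 i| < t} :=
        measurableSet_lt (m1.mul m2) measurable_const
      rw [hS'def, Set.setOf_and, Set.setOf_and]
      exact A.inter (B.inter C)
    have hvol : volume (S (d+1) t) = ∫⁻ a : ℝ, volume (Prod.mk a ⁻¹' S') := by
      rw [hpre, ← MeasurableEquiv.map_apply e,
        (volume_preserving_piFinSuccAbove (fun _ : Fin (d+1) => ℝ) 0).map_eq,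
        Measure.volume_eq_prod, Measure.prod_apply hS'meas]
    -- the sectional volume function
    set g : ℝ → ℝ := fun u => (2:ℝ)^d * ((t/u) * ∑ k ∈ Finset.range d,
      (Real.log u - Real.log t)^k / (Nat.factorial k)) with hgdef
    set F : ℝ → ℝ≥0∞ := fun u =>
      (Set.Ioo 0 t).indicator (fun _ => ENNReal.ofReal ((2:ℝ)^d)) u
        + (Set.Ioc t 1).indicator (fun u => ENNReal.ofReal (g u)) u with hFdef
    have hFmeas : Measurable F := by
      refine Measurable.add ?_ ?_
      · exact measurable_const.indicator measurableSet_Ioo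
      · refine Measurable.indicator ?_ measurableSet_Ioc
        refine ENNReal.measurable_ofReal.comp ?_
        refine measurable_const.mul (Measurable.mul ?_ ?_)
        · exact measurable_const.div measurable_id
        · exact Finset.measurable_sum _ fun k _ =>
            ((Real.measurable_log.sub measurable_const).pow_const k).div_const _
    have hsect : ∀ a : ℝ, a ≠ 0 → |a| ≠ t → volume (Prod.mk a ⁻¹' S') = F |a| := by
      intro a ha0 hat
      have habs : 0 < |a| := abs_pos.2 ha0
      rcases lt_or_ge 1 |a| with hgt | hle
      · have hem : Prod.mk a ⁻¹' S' = ∅ := by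
          ext b
          simp only [Set.mem_preimage, hS'def, Set.mem_setOf_eq, Set.mem_empty_iff_false,
            iff_false, not_and]
          intro hb
          exact absurd hb (not_le.2 hgt)
        have h1' : |a| ∉ Set.Ioo 0 t := fun h => absurd h.2 (not_lt.2 (h1.le.trans hgt.le))
        have h2' : |a| ∉ Set.Ioc t 1 := fun h => absurd h.2 (not_le.2 hgt)
        rw [hem, hFdef]
        simp only [Set.indicator_of_notMem h1', Set.indicator_of_notMem h2',
          add_zero, measure_empty]
      · have hsec : Prod.mk a ⁻¹' S' = S d (t / |a|) := by
          ext b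
          simp only [Set.mem_preimage, hS'def, Set.mem_setOf_eq, S]
          constructor
          · rintro ⟨-, h2, h3⟩
            exact ⟨h2, (lt_div_iff₀ habs).2 (by rwa [mul_comm] at h3)⟩
          · rintro ⟨h2, h3⟩
            exact ⟨hle, h2, by rw [mul_comm]; exact (lt_div_iff₀ habs).1 h3⟩
        rw [hsec]
        rcases lt_or_ge (|a|) t with hlt | hge
        · have hmem : |a| ∈ Set.Ioo 0 t := ⟨habs, hlt⟩
          have h2' : |a| ∉ Set.Ioc t 1 := fun h => absurd h.1 (not_lt.2 hlt.le)
          rw [vol_S_big ((one_lt_div habs).2 hlt), hFdef]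
          simp only [Set.indicator_of_mem hmem, Set.indicator_of_notMem h2', add_zero]
        · have hgt' : t < |a| := lt_of_le_of_ne hge (Ne.symm hat)
          have h0 : 0 < t / |a| := div_pos ht habs
          have hlt1 : t / |a| < 1 := (div_lt_one habs).2 hgt'
          have hmem2 : |a| ∈ Set.Ioc t 1 := ⟨hgt', hle⟩
          have hnmem1 : |a| ∉ Set.Ioo 0 t := fun h => absurd h.2 (not_lt.2 hge)
          rw [ih h0 hlt1, hFdef]
          simp only [Set.indicator_of_notMem hnmem1, Set.indicator_of_mem hmem2, zero_add,
            hgdef]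
          rw [Real.log_div ht.ne' habs.ne', neg_sub]
    have hae : (fun a => volume (Prod.mk a ⁻¹' S')) =ᵐ[volume] fun a => F |a| := by
      have hnull : volume ({0, t, -t} : Set ℝ) = 0 :=
        (((Set.finite_singleton (-t)).insert t).insert 0).measure_zero _
      have hev : ∀ᵐ a : ℝ ∂volume, a ∉ ({0, t, -t} : Set ℝ) :=
        measure_eq_zero_iff_ae_notMem.1 hnull
      filter_upwards [hev] with a ha
      have ha0 : a ≠ 0 := fun h => ha (by simp [h])
      have hat : |a| ≠ t := by
        intro h
        rcases (abs_eq ht.le).1 h with h' | h'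
        · exact ha (by simp [h'])
        · exact ha (by simp [h'])
      exact hsect a ha0 hat
    rw [hvol, lintegral_congr_ae hae, lintegral_comp_abs F hFmeas]
    -- compute the integral of F over (0, ∞)
    have hint1 : ∫⁻ u in Set.Ioi (0:ℝ),
        (Set.Ioo 0 t).indicator (fun _ => ENNReal.ofReal ((2:ℝ)^d)) u
          = ENNReal.ofReal ((2:ℝ)^d) * ENNReal.ofReal t := by
      rw [lintegral_indicator measurableSet_Ioo, Measure.restrict_restrict measurableSet_Ioo,
        Set.inter_eq_self_of_subset_left (fun u hu => hu.1), setLIntegral_const,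
        Real.volume_Ioo]
      norm_num
    have hint2 : ∫⁻ u in Set.Ioi (0:ℝ),
        (Set.Ioc t 1).indicator (fun u => ENNReal.ofReal (g u)) u
          = ENNReal.ofReal (∫ u in Set.Ioc t 1, g u) := by
      rw [lintegral_indicator measurableSet_Ioc, Measure.restrict_restrict measurableSet_Ioc,
        Set.inter_eq_self_of_subset_left (show Set.Ioc t 1 ⊆ Set.Ioi 0 from fun u hu => lt_trans ht hu.1)]
      have hcont : ContinuousOn g (Set.Icc t 1) := by
        have hne : ∀ u ∈ Set.Icc t 1, u ≠ 0 := fun u hu => (lt_of_lt_of_le ht hu.1).ne'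
        refine continuousOn_const.mul (ContinuousOn.mul ?_ ?_)
        · exact continuousOn_const.div continuousOn_id hne
        · refine continuousOn_finset_sum _ fun k _ => ?_
          exact (((Real.continuousOn_log.mono
            (fun u hu => Set.mem_compl_singleton_iff.2 (hne u hu))).sub
              continuousOn_const).pow k).div_const _
      have hInt : IntegrableOn g (Set.Ioc t 1) :=
        (hcont.integrableOn_Icc).mono_set Set.Ioc_subset_Icc_self
      have hnn : ∀ u ∈ Set.Ioc t 1, 0 ≤ g u := by
        intro u hu
        have h0u : 0 < u := lt_trans ht hu.1
        have hlog : Real.log t ≤ Real.log u := (Real.log_le_log_iff ht h0u).2 hu.1.le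
        exact mul_nonneg (by positivity) (mul_nonneg (div_nonneg ht.le h0u.le)
          (Finset.sum_nonneg fun k _ => div_nonneg (pow_nonneg (sub_nonneg.2 hlog) k)
            (Nat.cast_nonneg _)))
      exact (ofReal_integral_eq_lintegral_ofReal hInt
        ((ae_restrict_iff' measurableSet_Ioc).2 (ae_of_all _ hnn))).symm
    have hsum : ∫⁻ u in Set.Ioi (0:ℝ), F u
        = ENNReal.ofReal ((2:ℝ)^d) * ENNReal.ofReal t
          + ENNReal.ofReal (∫ u in Set.Ioc t 1, g u) := by
      rw [hFdef, lintegral_add_left (measurable_const.indicator measurableSet_Ioo),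
        hint1, hint2]
    -- evaluate the real integral
    have hik : ∀ k : ℕ, IntervalIntegrable
        (fun u => (t/u) * ((Real.log u - Real.log t)^k / (Nat.factorial k : ℝ)))
        volume t 1 := by
      intro k
      apply ContinuousOn.intervalIntegrable
      rw [Set.uIcc_of_le h1.le]
      have hne : ∀ u ∈ Set.Icc t 1, u ≠ 0 := fun u hu => (lt_of_lt_of_le ht hu.1).ne'
      exact (continuousOn_const.div continuousOn_id hne).mul
        ((((Real.continuousOn_log.mono
          (fun u hu => Set.mem_compl_singleton_iff.2 (hne u hu))).sub
            continuousOn_const).pow k).div_const _)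
    have key : ∀ k : ℕ, (∫ u in t..1, (t/u) * ((Real.log u - Real.log t)^k / (Nat.factorial k : ℝ)))
        = t * ((-Real.log t)^(k+1) / (Nat.factorial (k+1) : ℝ)) := by
      intro k
      have hderiv : ∀ u ∈ Set.uIcc t 1, HasDerivAt
          (fun u => (t / (Nat.factorial (k+1) : ℝ)) * (Real.log u - Real.log t)^(k+1))
          ((t/u) * ((Real.log u - Real.log t)^k / (Nat.factorial k : ℝ))) u := by
        intro u hu
        rw [Set.uIcc_of_le h1.le] at hu
        have hu0 : 0 < u := lt_of_lt_of_le ht hu.1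
        have hlog : HasDerivAt (fun u : ℝ => Real.log u - Real.log t) (1/u) u := by
          simpa using (Real.hasDerivAt_log hu0.ne').sub_const (Real.log t)
        have hpow := (hlog.fun_pow (k+1)).const_mul (t / (Nat.factorial (k+1) : ℝ))
        refine hpow.congr_deriv ?_
        symm
        have hfact : (Nat.factorial (k+1) : ℝ) = (k+1) * (Nat.factorial k : ℝ) := by
          rw [Nat.factorial_succ]; push_cast; ring
        rw [hfact]
        have hk0 : (Nat.factorial k : ℝ) ≠ 0 := Nat.cast_ne_zero.2 (Nat.factorial_ne_zero k)
        simp only [Nat.add_sub_cancel, Nat.cast_add, Nat.cast_one]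
        field_simp
      rw [intervalIntegral.integral_eq_sub_of_hasDerivAt hderiv (hik k)]
      simp only [Real.log_one, zero_sub, sub_self]
      rw [zero_pow (by omega : k + 1 ≠ 0)]
      ring
    have hreal : ∫ u in Set.Ioc t 1, g u
        = ∑ k ∈ Finset.range d, (2:ℝ)^d * (t * ((-Real.log t)^(k+1) / (Nat.factorial (k+1) : ℝ))) := by
      have hg1 : ∀ u : ℝ, g u = ∑ k ∈ Finset.range d,
          (2:ℝ)^d * ((t/u) * ((Real.log u - Real.log t)^k / (Nat.factorial k : ℝ))) := by
        intro u
        simp only [hgdef]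
        rw [Finset.mul_sum, Finset.mul_sum]
      rw [← intervalIntegral.integral_of_le h1.le]
      simp only [hg1]
      rw [intervalIntegral.integral_finset_sum (fun k _ => ((hik k).const_mul _))]
      refine Finset.sum_congr rfl fun k _ => ?_
      rw [intervalIntegral.integral_const_mul, key k]
    -- final algebra
    have hlp : (0:ℝ) ≤ -Real.log t := neg_nonneg.2 (Real.log_neg ht h1).le
    have hsnn : (0:ℝ) ≤ ∑ k ∈ Finset.range d,
        (2:ℝ)^d * (t * ((-Real.log t)^(k+1) / (Nat.factorial (k+1) : ℝ))) :=
      Finset.sum_nonneg fun k _ => mul_nonneg (by positivity)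
        (mul_nonneg ht.le (div_nonneg (pow_nonneg hlp _) (Nat.cast_nonneg _)))
    rw [hsum, hreal, ← ENNReal.ofReal_mul (by positivity : (0:ℝ) ≤ 2^d),
      ← ENNReal.ofReal_add (by positivity) hsnn,
      show (2:ℝ≥0∞) = ENNReal.ofReal 2 from (ENNReal.ofReal_ofNat 2).symm,
      ← ENNReal.ofReal_mul (by norm_num : (0:ℝ) ≤ 2)]
    congr 1
    rw [Finset.sum_range_succ' (fun k => (-Real.log t)^k / (Nat.factorial k : ℝ)) d]
    rw [show ∑ k ∈ Finset.range d,
        (2:ℝ)^d * (t * ((-Real.log t)^(k+1) / (Nat.factorial (k+1) : ℝ)))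
        = 2^d * t * ∑ k ∈ Finset.range d, (-Real.log t)^(k+1) / (Nat.factorial (k+1) : ℝ) from by
      rw [Finset.mul_sum]
      exact Finset.sum_congr rfl fun k _ => by ring]
    simp only [pow_zero, Nat.factorial_zero, Nat.cast_one, div_one]
    ring

end Stmt10Aux

set_option maxHeartbeats 1000000 in
/-- volume asymptotics for the product form: for `d ≥ 2` and
`C(t) = {x ∈ [-1,1]^d : |x₁ ⋯ x_d| < t}`, one has
`Vol_d(C(t)) / (t(-log t)^{d-1}) → 2^d/(d-1)!` as `t → 0⁺`. -/
theorem stmt10 {d : ℕ} (hd : 2 ≤ d) :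
    Tendsto
      (fun t : ℝ =>
        (volume {x : Fin d → ℝ | (∀ i, |x i| ≤ 1) ∧ |∏ i, x i| < t}).toReal
          / (t * (-Real.log t) ^ (d - 1)))
      (nhdsWithin 0 (Set.Ioi 0))
      (nhds ((2 : ℝ) ^ d / (Nat.factorial (d - 1) : ℝ))) := by
  have hd1 : d - 1 ∈ Finset.range d := Finset.mem_range.2 (by omega)
  -- the limit of the rational function of s = -log t
  have hg : Tendsto (fun s : ℝ => ∑ k ∈ Finset.range d,
      ((2:ℝ)^d / (Nat.factorial k : ℝ)) * (s^k / s^(d-1)))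
      atTop (nhds ((2:ℝ)^d / (Nat.factorial (d-1) : ℝ))) := by
    have hterm : ∀ k ∈ Finset.range d, Tendsto
        (fun s : ℝ => ((2:ℝ)^d / (Nat.factorial k : ℝ)) * (s^k / s^(d-1))) atTop
        (nhds (if k = d - 1 then (2:ℝ)^d / (Nat.factorial k : ℝ) else 0)) := by
      intro k hk
      by_cases hkd : k = d - 1
      · rw [if_pos hkd]
        simp only [← hkd]
        have hev : (fun _ : ℝ => (2:ℝ)^d / (Nat.factorial k : ℝ)) =ᶠ[atTop]
            (fun s : ℝ => ((2:ℝ)^d / (Nat.factorial k : ℝ)) * (s^k / s^k)) := by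
          filter_upwards [eventually_gt_atTop (0:ℝ)] with s hs
          rw [div_self (pow_ne_zero _ hs.ne'), mul_one]
        exact tendsto_const_nhds.congr' hev
      · simp only [if_neg hkd]
        have hklt : k < d - 1 := by
          have := Finset.mem_range.1 hk; omega
        have hm : d - 1 - k ≠ 0 := by omega
        have hEq : (fun s : ℝ => s^k / s^(d-1)) =ᶠ[atTop]
            (fun s : ℝ => (s^(d-1-k))⁻¹) := by
          filter_upwards [eventually_gt_atTop (0:ℝ)] with s hs
          have hsp : s^(d-1) = s^k * s^(d-1-k) := by
            rw [← pow_add]; congr 1; omega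
          rw [hsp, div_mul_eq_div_div, div_self (pow_ne_zero _ hs.ne'), one_div]
        have hinv : Tendsto (fun s : ℝ => (s^(d-1-k))⁻¹) atTop (nhds 0) :=
          (tendsto_pow_atTop hm).inv_tendsto_atTop
        have := (hinv.congr' hEq.symm).const_mul ((2:ℝ)^d / (Nat.factorial k : ℝ))
        simpa using this
    have hsum := tendsto_finset_sum (Finset.range d) hterm
    have heval : (∑ k ∈ Finset.range d,
        (if k = d - 1 then (2:ℝ)^d / (Nat.factorial k : ℝ) else 0))
          = (2:ℝ)^d / (Nat.factorial (d-1) : ℝ) := by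
      rw [Finset.sum_ite_eq' (Finset.range d) (d-1)
        (fun k => (2:ℝ)^d / (Nat.factorial k : ℝ)), if_pos hd1]
    rwa [heval] at hsum
  have hcomp : Tendsto (fun t : ℝ => -Real.log t) (nhdsWithin 0 (Set.Ioi 0)) atTop :=
    tendsto_neg_atBot_atTop.comp Real.tendsto_log_nhdsGT_zero
  have hlim : Tendsto (fun t : ℝ => ∑ k ∈ Finset.range d,
      ((2:ℝ)^d / (Nat.factorial k : ℝ)) * ((-Real.log t)^k / (-Real.log t)^(d-1)))
      (nhdsWithin 0 (Set.Ioi 0)) (nhds ((2:ℝ)^d / (Nat.factorial (d-1) : ℝ))) :=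
    hg.comp hcomp
  refine hlim.congr' ?_
  filter_upwards [Ioo_mem_nhdsGT_of_mem (Set.left_mem_Ico.2 one_pos)] with t htt
  obtain ⟨ht0, ht1⟩ := htt
  have hvol : (volume {x : Fin d → ℝ | (∀ i, |x i| ≤ 1) ∧ |∏ i, x i| < t}).toReal
      = (2:ℝ)^d * (t * ∑ k ∈ Finset.range d, (-Real.log t)^k / (Nat.factorial k : ℝ)) := by
    rw [show {x : Fin d → ℝ | (∀ i, |x i| ≤ 1) ∧ |∏ i, x i| < t} = Stmt10Aux.S d t from rfl,
      Stmt10Aux.vol_S ht0 ht1, ENNReal.toReal_ofReal]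
    have hlp : (0:ℝ) ≤ -Real.log t := neg_nonneg.2 (Real.log_neg ht0 ht1).le
    exact mul_nonneg (by positivity) (mul_nonneg ht0.le (Finset.sum_nonneg fun k _ =>
      div_nonneg (pow_nonneg hlp _) (Nat.cast_nonneg _)))
  rw [hvol]
  have hs : (0:ℝ) < -Real.log t := neg_pos.2 (Real.log_neg ht0 ht1)
  have hden : t * (-Real.log t)^(d-1) ≠ 0 := by positivity
  rw [eq_div_iff hden, Finset.sum_mul]
  rw [show (2:ℝ)^d * (t * ∑ k ∈ Finset.range d, (-Real.log t)^k / (Nat.factorial k : ℝ))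
      = ∑ k ∈ Finset.range d, (2:ℝ)^d * (t * ((-Real.log t)^k / (Nat.factorial k : ℝ))) from by
    rw [Finset.mul_sum, Finset.mul_sum]]
  refine Finset.sum_congr rfl fun k _ => ?_
  have hfk : (Nat.factorial k : ℝ) ≠ 0 := Nat.cast_ne_zero.2 (Nat.factorial_ne_zero k)
  field_simp
end

section
/- Let $(X,\mu)$ be a probability space and for each $T$ in an index set $\mathscr{T}$ let $f_T : X \to (0,\infty)$ be measurable, with a 'size' function $T \mapsto \|T\|_\infty \in [1,\infty)$. Suppose there are $a, \lambda > 0$, $b \ge 0$ such that for a given sequence of finite subsets $\Delta_n \subset \mathscr{T}$ with (i) $\min\{\|T\|_\infty : T \in \Delta_n\} \to \infty$, (ii) $|\Delta_n|^a(\log|\Delta_n|)^b / \rho(\Delta_n) \to \infty$ where $\rho(\Delta_n) = \max\{(\log\|T\|_\infty)^{a\delta} : T \in \Delta_n\}$ for a fixed $\delta > 0$, and (iii) for every $u > 0$, $\mu(\{x : |\Delta_n|^a(\log|\Delta_n|)^b \min_{T\in\Delta_n} f_T(x) > u\}) \to e^{-(\lambda u)^a}$. Then for every $c_1 > 0$,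 $\mu(\{x \in X : \liminf_{\|T\|_\infty \to \infty} (\log\|T\|_\infty)^{a\delta} f_T(x) > c_1\}) = 0$. -/
open MeasureTheory Filter

/-!
If `liminf (log ‖T‖)^{aδ} f_T(x) > c₁`, then along `Δₙ` every `f_T` eventually exceeds
`c₁ / (log ‖T‖)^{aδ}`, and by (ii) this is eventually at least `u` divided by the
normalisation `|Δₙ|^a (log|Δₙ|)^b`, for any fixed `u`. So the set in question lies in
the `liminf` of the events of (iii), whose measure is at most `e^{-(λu)^a}` by Fatou;
letting `u → ∞` shows it is null.
-/

theorem measure_le_ofReal_of_eventually_mem {X : Type*} [MeasurableSpace X] {μ : Measure X}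
    [IsFiniteMeasure μ] {A : Set X} {E : ℕ → Set X} {p : ℝ}
    (hA : ∀ x ∈ A, ∀ᶠ n in atTop, x ∈ E n)
    (hE : Tendsto (fun n => (μ (E n)).toReal) atTop (nhds p)) :
    μ A ≤ ENNReal.ofReal p := by
  set S : ℕ → Set X := fun N => ⋂ n ∈ Set.Ici N, E n
  have hS_mono : Monotone S := fun N M hNM =>
    Set.biInter_subset_biInter_left fun n hn => hNM.trans hn
  have hA_sub : A ⊆ ⋃ N, S N := fun x hx => by
    obtain ⟨N, hN⟩ := (hA x hx).exists_forall_of_atTop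
    exact Set.mem_iUnion.mpr ⟨N, Set.mem_biInter fun n hn => hN n hn⟩
  have hS_le : ∀ N, μ (S N) ≤ ENNReal.ofReal p := fun N => by
    have hS_le_E : (μ (S N)).toReal ≤ p :=
      ge_of_tendsto hE <| eventually_atTop.mpr ⟨N, fun n hn =>
        ENNReal.toReal_mono (measure_ne_top μ _)
          (measure_mono (Set.biInter_subset_of_mem (Set.mem_Ici.mpr hn)))⟩
    rw [← ENNReal.ofReal_toReal (measure_ne_top μ (S N))]
    exact ENNReal.ofReal_le_ofReal hS_le_E
  calc μ A ≤ μ (⋃ N, S N) := measure_mono hA_sub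
    _ = ⨆ N, μ (S N) := hS_mono.measure_iUnion
    _ ≤ ENNReal.ofReal p := iSup_le hS_le

theorem lt_mul_of_div_mul_le_of_lt_mul {u c w K φ : ℝ} (hu : 0 < u) (hc : 0 < c) (hφ : 0 < φ)
    (hK : u / c * w ≤ K) (hcw : c < w * φ) : u < K * φ :=
  calc u = u / c * c := (div_mul_cancel₀ u hc.ne').symm
    _ < u / c * (w * φ) := mul_lt_mul_of_pos_left hcw (div_pos hu hc)
    _ = u / c * w * φ := (mul_assoc _ _ _).symm
    _ ≤ K * φ := mul_le_mul_of_nonneg_right hK hφ.le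

theorem eventually_lt_mul_inf' {𝒯 : Type*} {Δ : ℕ → Finset 𝒯} (hne : ∀ n, (Δ n).Nonempty)
    {φ w : 𝒯 → ℝ} {K : ℕ → ℝ} {u c : ℝ} (hu : 0 < u) (hc : 0 < c) (hφ : ∀ T, 0 < φ T)
    (hK : ∀ᶠ n in atTop, ∀ T ∈ Δ n, u / c * w T ≤ K n)
    (hcw : ∀ᶠ n in atTop, ∀ T ∈ Δ n, c < w T * φ T) :
    ∀ᶠ n in atTop, u < K n * (Δ n).inf' (hne n) φ := by
  filter_upwards [hK, hcw] with n hKn hcwn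
  obtain ⟨T, hT, hT_inf⟩ := Finset.exists_mem_eq_inf' (hne n) φ
  rw [hT_inf]
  exact lt_mul_of_div_mul_le_of_lt_mul hu hc (hφ T) (hKn T hT) (hcwn T hT)

theorem tendsto_exp_neg_mul_rpow_atTop {lam a : ℝ} (hlam : 0 < lam) (ha : 0 < a) :
    Tendsto (fun u : ℝ => Real.exp (-(lam * u) ^ a)) atTop (nhds 0) :=
  Real.tendsto_exp_atBot.comp <| tendsto_neg_atBot_iff.mpr <|
    (tendsto_rpow_atTop ha).comp (tendsto_id.const_mul_atTop hlam)

theorem stmt17_general {X 𝒯 : Type*} [MeasurableSpace X] (μ : Measure X) [IsProbabilityMeasure μ]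
    (f : 𝒯 → X → ℝ) (hfpos : ∀ T x, 0 < f T x)
    (size : 𝒯 → ℝ)
    (a lam b δ : ℝ) (ha : 0 < a) (hlam : 0 < lam)
    (Δ : ℕ → Finset 𝒯) (hne : ∀ n, (Δ n).Nonempty)
    (hi : ∀ R : ℝ, ∀ᶠ n in atTop, ∀ T ∈ Δ n, R ≤ size T)
    (hii : ∀ C : ℝ, ∀ᶠ n in atTop, ∀ T ∈ Δ n,
      C * (Real.log (size T)) ^ (a * δ)
        ≤ ((Δ n).card : ℝ) ^ a * (Real.log ((Δ n).card)) ^ b)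
    (hiii : ∀ u : ℝ, 0 < u →
      Tendsto (fun n =>
          (μ {x | u < ((Δ n).card : ℝ) ^ a * (Real.log ((Δ n).card)) ^ b
            * (Δ n).inf' (hne n) (fun T => f T x)}).toReal)
        atTop (nhds (Real.exp (-(lam * u) ^ a)))) :
    ∀ c₁ : ℝ, 0 < c₁ →
      μ {x | ∃ T₀ : ℝ, ∀ T : 𝒯, T₀ ≤ size T →
        c₁ < (Real.log (size T)) ^ (a * δ) * f T x} = 0 := by
  intro c₁ hc₁
  have hbound : ∀ u > 0, μ {x | ∃ T₀ : ℝ, ∀ T : 𝒯, T₀ ≤ size T →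
      c₁ < (Real.log (size T)) ^ (a * δ) * f T x} ≤ ENNReal.ofReal (Real.exp (-(lam * u) ^ a)) :=
    fun u hu => measure_le_ofReal_of_eventually_mem
      (fun x ⟨T₀, hx⟩ => eventually_lt_mul_inf' hne hu hc₁ (fun T => hfpos T x) (hii (u / c₁))
        ((hi T₀).mono fun n hn T hT => hx T (hn T hT)))
      (hiii u hu)
  have hlim := ENNReal.tendsto_ofReal (tendsto_exp_neg_mul_rpow_atTop hlam ha)
  rw [ENNReal.ofReal_zero] at hlim
  exact nonpos_iff_eq_zero.mp <| ge_of_tendsto hlim <| (eventually_gt_atTop 0).mono hbound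

/-- abstract core of Proposition A.1: Weibull asymptotics implies a
logarithm law: suppose the minima `M_Δₙ = min_{T ∈ Δₙ} f_T` along a sequence of finite
sets `Δₙ` satisfying (i) `min_{T ∈ Δₙ} ‖T‖_∞ → ∞` and (ii)
`|Δₙ|^a (log|Δₙ|)^b / ρ(Δₙ) → ∞` (where `ρ(Δₙ) = max_{T∈Δₙ} (log‖T‖_∞)^{aδ}`) have
Weibull tails: (iii) `μ(|Δₙ|^a(log|Δₙ|)^b · M_Δₙ > u) → e^{-(λu)^a}` for every `u > 0`.
Then for every `c₁ > 0` the set of `x` with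
`liminf_{‖T‖_∞ → ∞} (log‖T‖_∞)^{aδ} f_T(x) > c₁` is null. -/
theorem stmt17 {X 𝒯 : Type*} [MeasurableSpace X] (μ : Measure X) [IsProbabilityMeasure μ]
    (f : 𝒯 → X → ℝ) (hfpos : ∀ T x, 0 < f T x) (hfmeas : ∀ T, Measurable (f T))
    (size : 𝒯 → ℝ) (hsize : ∀ T, 1 ≤ size T)
    (a lam b δ : ℝ) (ha : 0 < a) (hlam : 0 < lam) (hb : 0 ≤ b) (hδ : 0 < δ)
    (Δ : ℕ → Finset 𝒯) (hne : ∀ n, (Δ n).Nonempty)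
    (hi : ∀ R : ℝ, ∀ᶠ n in atTop, ∀ T ∈ Δ n, R ≤ size T)
    (hii : ∀ C : ℝ, ∀ᶠ n in atTop, ∀ T ∈ Δ n,
      C * (Real.log (size T)) ^ (a * δ)
        ≤ ((Δ n).card : ℝ) ^ a * (Real.log ((Δ n).card)) ^ b)
    (hiii : ∀ u : ℝ, 0 < u →
      Tendsto (fun n =>
          (μ {x | u < ((Δ n).card : ℝ) ^ a * (Real.log ((Δ n).card)) ^ b
            * (Δ n).inf' (hne n) (fun T => f T x)}).toReal)
        atTop (nhds (Real.exp (-(lam * u) ^ a)))) :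
    ∀ c₁ : ℝ, 0 < c₁ →
      μ {x | ∃ T₀ : ℝ, ∀ T : 𝒯, T₀ ≤ size T →
        c₁ < (Real.log (size T)) ^ (a * δ) * f T x} = 0 :=
  stmt17_general μ f hfpos size a lam b δ ha hlam Δ hne hi hii hiii
end
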